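/- Combining the previous estimates: for A an n×n matrix with singular values σᵢ, p ∈ [1,2], and k ≥ 1, we have sqrt(Σ_{i≥k} σᵢ²) ≤ k^{1/2 - 1/p} · ‖A‖ₚ, i.e., the Frobenius norm of the residual after removing the top k−1 singular values is bounded by k^{1/2−1/p} times the Schatten-p norm. -/

import Mathlib

open Matrix Finset Real

/-- The singular values of a real square matrix: square roots of the
eigenvalues of `Aᴴ * A`. -/
noncomputable def singularValues {n : ℕ} (A : Matrix (Fin n) (Fin n) ℝ) : Fin n → ℝ :=
  fun i => Real.sqrt ((Matrix.isHermitian_conjTranspose_mul_self A).eigenvalues i)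

/-- The Schatten-`p` norm of a real square matrix: the `ℓ^p` norm of its
singular values. -/
noncomputable def schattenNorm {n : ℕ} (A : Matrix (Fin n) (Fin n) ℝ) (p : ℝ) : ℝ :=
  (∑ i, singularValues A i ^ p) ^ (1 / p)

/-!
For an antitone nonnegative sequence `σ` with `W = ∑ σᵢᵖ`, Markov's bound gives
`(k+1) σₖᵖ ≤ W`, while on the tail `σᵢ² = σᵢ^(2-p) σᵢᵖ ≤ σₖ^(2-p) σᵢᵖ`. Hence
`∑_{i ≥ k} σᵢ² ≤ σₖ^(2-p) W ≤ (W/(k+1))^((2-p)/p) W = (k+1)^(1 - 2/p) W^(2/p)`.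
-/

section AntitoneSequence

variable {ι : Type*} [Preorder ι] [Fintype ι] {σ : ι → ℝ}

theorem Antitone.card_Iic_mul_le_sum [LocallyFiniteOrderBot ι] (hσ : Antitone σ)
    (hσ0 : ∀ i, 0 ≤ σ i) (k : ι) : #(Iic k) * σ k ≤ ∑ i, σ i := by
  calc (#(Iic k) : ℝ) * σ k = #(Iic k) • σ k := (nsmul_eq_mul _ _).symm
    _ ≤ ∑ i ∈ Iic k, σ i := card_nsmul_le_sum _ _ _ fun i hi => hσ (mem_Iic.mp hi)
    _ ≤ ∑ i, σ i := sum_le_univ_sum_of_nonneg hσ0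

theorem Antitone.sum_Ici_sq_le [LocallyFiniteOrderTop ι] (hσ : Antitone σ)
    (hσ0 : ∀ i, 0 ≤ σ i) {p : ℝ} (hp0 : 0 ≤ p) (hp2 : p ≤ 2) (k : ι) :
    ∑ i ∈ Ici k, σ i ^ 2 ≤ σ k ^ (2 - p) * ∑ i, σ i ^ p := by
  have hterm : ∀ i ∈ Ici k, σ i ^ 2 ≤ σ k ^ (2 - p) * σ i ^ p := by
    intro i hi
    have hsplit : σ i ^ 2 = σ i ^ (2 - p) * σ i ^ p := by
      rw [← rpow_add_of_nonneg (hσ0 i) (by linarith) hp0]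
      norm_num
    rw [hsplit]
    exact mul_le_mul_of_nonneg_right
      (rpow_le_rpow (hσ0 i) (hσ (mem_Ici.mp hi)) (by linarith)) (rpow_nonneg (hσ0 i) p)
  calc ∑ i ∈ Ici k, σ i ^ 2 ≤ ∑ i ∈ Ici k, σ k ^ (2 - p) * σ i ^ p := sum_le_sum hterm
    _ = σ k ^ (2 - p) * ∑ i ∈ Ici k, σ i ^ p := (mul_sum _ _ _).symm
    _ ≤ σ k ^ (2 - p) * ∑ i, σ i ^ p :=
      mul_le_mul_of_nonneg_left (sum_le_univ_sum_of_nonneg fun i => rpow_nonneg (hσ0 i) p)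
        (rpow_nonneg (hσ0 k) _)

theorem Antitone.sqrt_sum_Ici_sq_le [LocallyFiniteOrderBot ι] [LocallyFiniteOrderTop ι]
    (hσ : Antitone σ) (hσ0 : ∀ i, 0 ≤ σ i) {p : ℝ} (hp0 : 0 < p) (hp2 : p ≤ 2) (k : ι) :
    √(∑ i ∈ Ici k, σ i ^ 2) ≤ (#(Iic k) : ℝ) ^ (1 / 2 - 1 / p) * (∑ i, σ i ^ p) ^ (1 / p) := by
  set c : ℝ := (#(Iic k) : ℝ)
  set W := ∑ i, σ i ^ p
  have hc : 0 < c := by simp [c]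
  have hW : 0 ≤ W := sum_nonneg fun i _ => rpow_nonneg (hσ0 i) p
  have hσp : Antitone fun i => σ i ^ p := fun i j hij => rpow_le_rpow (hσ0 j) (hσ hij) hp0.le
  have hmarkov : σ k ^ p ≤ W / c := by
    rw [le_div_iff₀ hc, mul_comm]
    exact hσp.card_Iic_mul_le_sum (fun i => rpow_nonneg (hσ0 i) p) k
  have hhead : σ k ^ (2 - p) ≤ (W / c) ^ ((2 - p) / p) := by
    calc σ k ^ (2 - p) = (σ k ^ p) ^ ((2 - p) / p) := by
          rw [← rpow_mul (hσ0 k), mul_div_cancel₀ _ hp0.ne']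
      _ ≤ (W / c) ^ ((2 - p) / p) :=
          rpow_le_rpow (rpow_nonneg (hσ0 k) p) hmarkov (div_nonneg (by linarith) hp0.le)
  have hrhs : (W / c) ^ ((2 - p) / p) * W = (c ^ (1 / 2 - 1 / p) * W ^ (1 / p)) ^ 2 := by
    rw [div_rpow hW hc.le, mul_pow, ← rpow_natCast, ← rpow_natCast, ← rpow_mul hc.le,
      ← rpow_mul hW, div_mul_eq_mul_div, ← rpow_add_one' hW (by positivity),
      div_eq_mul_inv, ← rpow_neg hc.le, mul_comm]
    congr 2 <;> field_simp <;> ring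
  rw [sqrt_le_iff]
  refine ⟨by positivity, ?_⟩
  calc ∑ i ∈ Ici k, σ i ^ 2 ≤ σ k ^ (2 - p) * W := hσ.sum_Ici_sq_le hσ0 hp0.le hp2 k
    _ ≤ (W / c) ^ ((2 - p) / p) * W := by gcongr
    _ = _ := hrhs

end AntitoneSequence

theorem schattenNorm_eq_rpow_sum_comp_perm {n : ℕ} (A : Matrix (Fin n) (Fin n) ℝ)
    (e : Equiv.Perm (Fin n)) (p : ℝ) :
    schattenNorm A p = (∑ i, (singularValues A ∘ e) i ^ p) ^ (1 / p) := by
  rw [schattenNorm, ← Equiv.sum_comp e fun i => singularValues A i ^ p]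
  rfl

/-- The Frobenius norm of the tail of the singular values is bounded by
`k^{1/2 - 1/p} ‖A‖ₚ`. -/
theorem sqrt_tail_le_rpow_mul_schattenNorm {n : ℕ} (A : Matrix (Fin n) (Fin n) ℝ)
    (σ : Fin n → ℝ) (hσ : ∃ e : Equiv.Perm (Fin n), σ = singularValues A ∘ e)
    (hmono : Antitone σ) (p : ℝ) (hp1 : 1 ≤ p) (hp2 : p ≤ 2) (k : Fin n) :
    Real.sqrt (∑ i ∈ Finset.Ici k, σ i ^ 2) ≤
      ((k : ℕ) + 1 : ℝ) ^ (1 / 2 - 1 / p) * schattenNorm A p := by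
  obtain ⟨e, rfl⟩ := hσ
  have hcard : (#(Iic k) : ℝ) = (k : ℕ) + 1 := by rw [Fin.card_Iic]; push_cast; rfl
  rw [schattenNorm_eq_rpow_sum_comp_perm A e p, ← hcard]
  exact hmono.sqrt_sum_Ici_sq_le (fun i => sqrt_nonneg _) (by linarith) hp2 k
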